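/- arXiv:1807.02579 — 4 statements merged into one kernel-verified Lean document; each statement's English description precedes it below -/
import Mathlib

section
/- Let L/K be fields of characteristic zero with intermediate fields E, F such that K is algebraically closed in E and E, F are algebraically disjoint over K. Then E ∩ F = K. -/
/-- Two intermediate fields `E`, `F` of `L/K` are algebraically disjoint over `K` if every
finite family of elements of `E` that is algebraically independent over `K` remains
algebraically independent over `F`. -/
def AlgebraicallyDisjoint {K L : Type*} [Field K] [Field L] [Algebra K L]
    (E F : IntermediateField K L) : Prop :=
  ∀ (n : ℕ) (x : Fin n → L), (∀ i, x i ∈ E) → AlgebraicIndependent K x →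
    AlgebraicIndependent F x

/-- `K` is algebraically closed in `E` if every element of `E` algebraic over `K` lies
in (the image of) `K`. -/
def AlgebraicallyClosedIn {K L : Type*} [Field K] [Field L] [Algebra K L]
    (E : IntermediateField K L) : Prop :=
  ∀ x ∈ E, IsAlgebraic K x → ∃ y : K, algebraMap K L y = x


theorem AlgebraicallyDisjoint.isAlgebraic_of_mem_inf {K L : Type*} [Field K] [Field L]
    [Algebra K L] {E F : IntermediateField K L} (hdisj : AlgebraicallyDisjoint E F)
    {α : L} (hα : α ∈ E ⊓ F) : IsAlgebraic K α := by
  by_contra htr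
  have hK : AlgebraicIndependent K ![α] := algebraicIndependent_iff_transcendental.mpr htr
  have hF : AlgebraicIndependent F ![α] :=
    hdisj 1 ![α] (fun i => by fin_cases i; exact hα.1) hK
  exact algebraicIndependent_iff_transcendental.mp hF
    (isAlgebraic_algebraMap (⟨α, hα.2⟩ : F))

theorem inf_eq_bot_of_algebraically_disjoint_general {K L : Type*} [Field K] [Field L]
    [Algebra K L] (E F : IntermediateField K L)
    (hclosed : AlgebraicallyClosedIn E)
    (hdisj : AlgebraicallyDisjoint E F) :
    E ⊓ F = ⊥ := by
  refine le_antisymm (fun α hα => ?_) bot_le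
  obtain ⟨y, rfl⟩ := hclosed α hα.1 (hdisj.isAlgebraic_of_mem_inf hα)
  exact IntermediateField.algebraMap_mem ⊥ y

/-- let `L/K` be fields of characteristic zero with intermediate fields
`E`, `F` such that `K` is algebraically closed in `E` and `E`, `F` are algebraically
disjoint over `K`.  Then `E ∩ F = K`. -/
theorem inf_eq_bot_of_algebraically_disjoint {K L : Type*} [Field K] [Field L]
    [Algebra K L] [CharZero K] (E F : IntermediateField K L)
    (hclosed : AlgebraicallyClosedIn E)
    (hdisj : AlgebraicallyDisjoint E F) :
    E ⊓ F = ⊥ :=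
  inf_eq_bot_of_algebraically_disjoint_general E F hclosed hdisj
end

section
/- Let E/E₀ be a finite field extension in characteristic zero and α ∈ E. If Tr_{E/E₀}(α^n) lies in a subfield K ⊂ E₀ for all n = 0, 1, ..., [E:E₀], then the minimal polynomial of α over E₀ has coefficients in K; in particular α is algebraic over K. -/
/-!
Embed `E` into an algebraic closure `A` of `E₀`. The conjugates `σ α` of `α` have power sums
`Tr(αⁿ)`, so by Newton's identities (which divide by `k`, hence characteristic zero) their
elementary symmetric functions lie in `K`, i.e. `P = ∏ σ, (X - σ α)` comes from a monic
`P₀ ∈ K[X]`. Thus `α` is integral over `K`, and its minimal polynomial `r` over `K` divides `P`,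
which divides a power of `m = minpoly E₀ α`. As `r` is separable, it divides `m` itself, while
`m ∣ r` holds over `E₀`; so `m = r`.
-/

open Polynomial Finset

namespace MvPolynomial

theorem esymm_mem_adjoin_psum {σ K : Type*} [Fintype σ] [Field K] [CharZero K] (k : ℕ) :
    esymm σ K k ∈ Algebra.adjoin K (psum σ K '' Set.Icc 1 k) := by
  induction k using Nat.strong_induction_on with
  | _ k ih =>
    rcases Nat.eq_zero_or_pos k with rfl | hk
    · simp [esymm_zero]
    set S := Algebra.adjoin K (psum σ K '' Set.Icc 1 k)
    have hlower : ∀ j < k, esymm σ K j ∈ S := fun j hj =>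
      Algebra.adjoin_mono (Set.image_mono (Set.Icc_subset_Icc_right hj.le)) (ih j hj)
    have hnewton : (k : MvPolynomial σ K) * esymm σ K k ∈ S := by
      rw [mul_esymm_eq_sum]
      refine S.mul_mem (S.pow_mem (S.neg_mem S.one_mem) _) (S.sum_mem fun a ha => ?_)
      rw [mem_filter, HasAntidiagonal.mem_antidiagonal] at ha
      refine S.mul_mem (S.mul_mem (S.pow_mem (S.neg_mem S.one_mem) _) (hlower _ ha.2)) ?_
      exact Algebra.subset_adjoin ⟨a.2, ⟨by omega, by omega⟩, rfl⟩
    have hk0 : (k : K) ≠ 0 := Nat.cast_ne_zero.2 hk.ne'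
    convert S.smul_mem hnewton (k : K)⁻¹ using 1
    rw [← nsmul_eq_mul, ← Nat.cast_smul_eq_nsmul K, smul_smul, inv_mul_cancel₀ hk0, one_smul]

end MvPolynomial

section Newton

variable {σ K A : Type*} [Fintype σ] [Field K] [CharZero K] [CommRing A] [Algebra K A]

theorem esymm_mem_bot_of_sum_pow_mem_bot {x : σ → A}
    (hx : ∀ n ∈ Set.Icc 1 (Fintype.card σ), ∑ i, x i ^ n ∈ (⊥ : Subalgebra K A))
    {k : ℕ} (hk : k ≤ Fintype.card σ) :
    (univ.val.map x).esymm k ∈ (⊥ : Subalgebra K A) := by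
  rw [← MvPolynomial.aeval_esymm_eq_multiset_esymm σ K]
  refine Algebra.adjoin_le (S := (⊥ : Subalgebra K A).comap (MvPolynomial.aeval x)) ?_
    (MvPolynomial.esymm_mem_adjoin_psum k)
  rintro _ ⟨n, hn, rfl⟩
  change MvPolynomial.aeval x (MvPolynomial.psum σ K n) ∈ (⊥ : Subalgebra K A)
  simp only [MvPolynomial.psum, map_sum, map_pow, MvPolynomial.aeval_X]
  exact hx n ⟨hn.1, hn.2.trans hk⟩

theorem prod_X_sub_C_mem_lifts_of_sum_pow_mem_bot {x : σ → A}
    (hx : ∀ n ∈ Set.Icc 1 (Fintype.card σ), ∑ i, x i ^ n ∈ (⊥ : Subalgebra K A)) :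
    ∏ i, (X - C (x i)) ∈ lifts (algebraMap K A) := by
  rw [lifts_iff_coeff_lifts]
  intro n
  have hprod : ∏ i, (X - C (x i)) = ((univ.val.map x).map fun a => X - C a).prod := by
    rw [Multiset.map_map]; rfl
  rw [hprod]
  rcases le_or_gt n (Fintype.card σ) with hn | hn
  · rw [Multiset.prod_X_sub_C_coeff _ (by simpa using hn), ← Algebra.mem_bot]
    refine Subalgebra.mul_mem _ (pow_mem (neg_mem (one_mem _)) _)
      (esymm_mem_bot_of_sum_pow_mem_bot hx ?_)
    simp
  · nontriviality A
    refine ⟨0, (map_zero _).trans (coeff_eq_zero_of_natDegree_lt ?_).symm⟩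
    rwa [natDegree_multiset_prod_X_sub_C_eq_card, Multiset.card_map, card_val, card_univ]

end Newton

theorem prod_X_sub_C_dvd_map_minpoly_pow {F E A : Type*} [CommRing F] [Ring E] [CommRing A]
    [Algebra F E] [Algebra F A] [Fintype (E →ₐ[F] A)] (α : E) :
    ∏ σ : E →ₐ[F] A, (X - C (σ α)) ∣
      (minpoly F α).map (algebraMap F A) ^ Fintype.card (E →ₐ[F] A) := by
  rw [← card_univ, ← prod_const]
  refine prod_dvd_prod_of_dvd _ _ fun σ _ => dvd_iff_isRoot.2 ?_
  rw [IsRoot, eval_map, ← aeval_def, aeval_algHom_apply, minpoly.aeval, map_zero]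

theorem minpoly_eq_map_minpoly_of_dvd_pow {K L E : Type*} [Field K] [Field L] [Ring E]
    [Algebra K L] [Algebra K E] [Algebra L E] [IsScalarTower K L E] {x : E}
    (hsep : (minpoly K x).Separable) {n : ℕ} (hn : n ≠ 0)
    (hdvd : (minpoly K x).map (algebraMap K L) ∣ minpoly L x ^ n) :
    minpoly L x = (minpoly K x).map (algebraMap K L) := by
  have hx : IsIntegral K x := minpoly.ne_zero_iff.1 hsep.ne_zero
  refine eq_of_monic_of_associated (minpoly.monic hx.tower_top) ((minpoly.monic hx).map _) ?_
  refine associated_of_dvd_dvd (minpoly.dvd_map_of_isScalarTower K L x) ?_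
  exact (hsep.map.squarefree.dvd_pow_iff_dvd hn).1 hdvd

/-- let `E/E₀` be a finite field extension in characteristic zero,
`α ∈ E`, and `K ⊆ E₀` a subfield.  If `Tr_{E/E₀}(αⁿ)` lies in `K` for all
`n = 0, 1, …, [E:E₀]`, then the minimal polynomial of `α` over `E₀` has coefficients
in `K`; in particular `α` is algebraic over `K`. -/
theorem minpoly_coeff_mem_of_trace_pow_mem {K E₀ E : Type*}
    [Field K] [Field E₀] [Field E] [CharZero K]
    [Algebra K E₀] [Algebra E₀ E] [Algebra K E] [IsScalarTower K E₀ E]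
    [FiniteDimensional E₀ E] (α : E)
    (htr : ∀ n : ℕ, n ≤ Module.finrank E₀ E →
      Algebra.trace E₀ E (α ^ n) ∈ (algebraMap K E₀).range) :
    (∀ i : ℕ, (minpoly E₀ α).coeff i ∈ (algebraMap K E₀).range) ∧ IsAlgebraic K α := by
  have : CharZero E₀ := charZero_of_injective_algebraMap (algebraMap K E₀).injective
  let A := AlgebraicClosure E₀
  have hcard : Fintype.card (E →ₐ[E₀] A) = Module.finrank E₀ E := AlgHom.card E₀ E A
  have hpsum : ∀ n ∈ Set.Icc 1 (Fintype.card (E →ₐ[E₀] A)),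
      ∑ σ : E →ₐ[E₀] A, σ α ^ n ∈ (⊥ : Subalgebra K A) := fun n hn => by
    obtain ⟨c, hc⟩ := htr n (hcard ▸ hn.2)
    refine Algebra.mem_bot.2 ⟨c, ?_⟩
    simp_rw [← map_pow, ← trace_eq_sum_embeddings A, IsScalarTower.algebraMap_apply K E₀ A, hc]
  obtain ⟨P₀, hP₀, -, hmonic⟩ := lifts_and_degree_eq_and_monic
    (prod_X_sub_C_mem_lifts_of_sum_pow_mem_bot hpsum)
    (monic_prod_of_monic _ _ fun σ _ => monic_X_sub_C (σ α))
  let ι : E →ₐ[E₀] A := IsAlgClosed.lift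
  have hroot : aeval α P₀ = 0 := by
    refine (map_eq_zero_iff (ι.restrictScalars K) (ι.restrictScalars K).injective).1 ?_
    rw [← aeval_algHom_apply, AlgHom.coe_restrictScalars', aeval_def, ← eval_map, hP₀, eval_prod]
    exact prod_eq_zero (mem_univ ι) (by simp)
  have hint : IsIntegral K α := ⟨P₀, hmonic, hroot⟩
  have hdvd :
      (minpoly K α).map (algebraMap K E₀) ∣ minpoly E₀ α ^ Fintype.card (E →ₐ[E₀] A) := by
    rw [← map_dvd_map' (algebraMap E₀ A), Polynomial.map_map, ← IsScalarTower.algebraMap_eq,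
      Polynomial.map_pow]
    exact (Polynomial.map_dvd _ (minpoly.dvd K α hroot)).trans
      (hP₀ ▸ prod_X_sub_C_dvd_map_minpoly_pow α)
  have heq := minpoly_eq_map_minpoly_of_dvd_pow (minpoly.irreducible hint).separable
    (Fintype.card_pos_iff.2 ⟨ι⟩).ne' hdvd
  exact ⟨fun i => ⟨(minpoly K α).coeff i, by rw [heq, coeff_map]⟩, hint.isAlgebraic⟩
end

section
/- Let q be a nondegenerate quadratic form over ℚ of rank 1, determined by α ∈ ℚ^×/(ℚ^×)². If for almost all primes ℓ the image of α in ℚ_ℓ^×/(ℚ_ℓ^×)² equals the class of a fixed nonzero rational number c, then α = c in ℚ^×/(ℚ^×)². -/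
/-!
Dividing by `c`, the claim is that a rational number which is a square in `ℚ_ℓ` for almost all
primes `ℓ` is a square in `ℚ`. Clearing denominators reduces this to an integer `b * a ^ 2` with
`b` squarefree, and it suffices to see that `b = 1`. Otherwise the quadratic character
`J(b | ·)` is nontrivial on odd numbers, and since it is periodic modulo `4|b|`, Dirichlet's
theorem yields infinitely many primes `ℓ` modulo which `b` is not a square. But an integer that
is a square in `ℚ_ℓ` is a square in `ℤ_ℓ`, hence modulo `ℓ`.
-/

open scoped NumberTheorySymbols

lemma Int.natAbs_dvd_two_of_squarefree {b : ℤ} (hb : Squarefree b)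
    (hodd : ∀ q : ℕ, q.Prime → (q : ℤ) ∣ b → q = 2) : b.natAbs ∣ 2 := by
  have hsub : b.natAbs.primeFactors ⊆ {2} := fun p hp => by
    obtain ⟨hp, hpb, -⟩ := Nat.mem_primeFactors.mp hp
    exact Finset.mem_singleton.mpr (hodd p hp (Int.natCast_dvd.mpr hpb))
  simpa [Nat.prod_primeFactors_of_squarefree (Int.squarefree_natAbs.mpr hb)] using
    Finset.prod_dvd_prod_of_subset _ _ id hsub

/-- Take `n ≡ 1 mod 4|d|` and `n` a nonsquare mod `q`: then `J(d | n) = J(d | 1)` by periodicity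
and `J(q | n) = J(n | q)` by reciprocity. -/
lemma jacobiSym.exists_odd_prime_mul_eq_neg_one {q : ℕ} [Fact q.Prime] (hq : q ≠ 2) {d : ℤ}
    (hqd : ¬ (q : ℤ) ∣ d) : ∃ n : ℕ, Odd n ∧ J(q * d | n) = -1 := by
  have hd : d ≠ 0 := by rintro rfl; exact hqd (dvd_zero _)
  obtain ⟨u, hu⟩ := FiniteField.exists_nonsquare (F := ZMod q) (by rwa [ZMod.ringChar_zmod_n])
  have hco : Nat.Coprime (4 * d.natAbs) q := by
    refine Nat.Coprime.mul_left (Nat.Coprime.pow_left 2 (m := 2) ?_) ?_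
    · exact (Nat.coprime_primes Nat.prime_two Fact.out).mpr (Ne.symm hq)
    · exact ((Nat.Prime.coprime_iff_not_dvd Fact.out).mpr
        (fun h => hqd (Int.natCast_dvd.mpr h))).symm
  obtain ⟨n, hn1, hnu⟩ := Nat.chineseRemainder hco 1 u.val
  have hmod : n % (4 * d.natAbs) = 1 := by
    rw [hn1, Nat.mod_eq_of_lt (by omega)]
  have hn4 : n % 4 = 1 := by
    rw [← Nat.mod_mod_of_dvd n (Dvd.intro _ rfl), hmod]
  have hnodd : Odd n := Nat.odd_iff.mpr (by omega)
  have hJd : J(d | n) = 1 := by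
    rw [jacobiSym.mod_right d hnodd, hmod, jacobiSym.one_right]
  have hJq : J(q | n) = -1 := by
    rw [jacobiSym.quadratic_reciprocity_one_mod_four' (Nat.Prime.odd_of_ne_two Fact.out hq) hn4,
      ZMod.nonsquare_iff_jacobiSym_eq_neg_one]
    have : ((n : ℤ) : ZMod q) = u := by
      rw [Int.cast_natCast, (ZMod.natCast_eq_natCast_iff _ _ _).mpr hnu, ZMod.natCast_zmod_val]
    rwa [this]
  exact ⟨n, hnodd, by rw [jacobiSym.mul_left, hJq, hJd, mul_one]⟩

lemma jacobiSym.exists_odd_eq_neg_one {b : ℤ} (hb : Squarefree b) (hb1 : b ≠ 1) :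
    ∃ n : ℕ, Odd n ∧ J(b | n) = -1 := by
  by_cases hodd : ∀ q : ℕ, q.Prime → (q : ℤ) ∣ b → q = 2
  · have h2 := (Nat.dvd_prime Nat.prime_two).mp (Int.natAbs_dvd_two_of_squarefree hb hodd)
    obtain rfl | rfl | rfl : b = -1 ∨ b = 2 ∨ b = -2 := by omega
    · exact ⟨3, by decide, by norm_num⟩
    · exact ⟨3, by decide, by norm_num⟩
    · exact ⟨5, by decide, by norm_num⟩
  · push Not at hodd
    obtain ⟨q, hq, ⟨d, rfl⟩, hq2⟩ := hodd
    have : Fact q.Prime := ⟨hq⟩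
    have hqd : ¬ (q : ℤ) ∣ d := fun ⟨e, he⟩ =>
      (Nat.prime_iff_prime_int.mp hq).not_isUnit (hb q ⟨e, by rw [he]; ring⟩)
    exact jacobiSym.exists_odd_prime_mul_eq_neg_one hq2 hqd

/-- `J(a | ·)` is periodic modulo `4|a|` on odd numbers, so by Dirichlet's theorem the primes
`ℓ ≡ n mod 4|a|` all have `J(a | ℓ) = -1`. -/
lemma jacobiSym.exists_prime_gt_eq_neg_one {a : ℤ} {n : ℕ} (hn : Odd n) (ha : J(a | n) = -1)
    (N : ℕ) : ∃ ℓ > N, ℓ.Prime ∧ J(a | ℓ) = -1 := by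
  have : NeZero n := ⟨hn.pos.ne'⟩
  have hcop : a.gcd n = 1 := by
    by_contra h
    rw [jacobiSym.eq_zero_iff_not_coprime.mpr h] at ha
    norm_num at ha
  have ha0 : a ≠ 0 := by
    rintro rfl
    rw [Int.gcd_zero_left, Int.natAbs_natCast] at hcop
    rw [hcop, jacobiSym.one_right] at ha
    norm_num at ha
  have : NeZero (4 * a.natAbs) := ⟨by positivity⟩
  have hunit : IsUnit (n : ZMod (4 * a.natAbs)) := by
    refine (ZMod.isUnit_iff_coprime n _).mpr (Nat.Coprime.mul_right ?_ ?_)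
    · exact Nat.Coprime.pow_right 2 (Nat.coprime_two_right.mpr hn)
    · exact Nat.coprime_comm.mp hcop
  obtain ⟨ℓ, hℓ, hp, hℓn⟩ := Nat.forall_exists_prime_gt_and_eq_mod hunit (max N 2)
  have hℓodd : Odd ℓ := hp.odd_of_ne_two (by omega)
  refine ⟨ℓ, by omega, hp, ?_⟩
  rw [jacobiSym.mod_right a hℓodd, (ZMod.natCast_eq_natCast_iff' _ _ _).mp hℓn,
    ← jacobiSym.mod_right a hn, ha]

lemma Int.exists_prime_notMem_not_isSquare_zmod {b : ℤ} (hb : Squarefree b) (hb1 : b ≠ 1)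
    (S : Finset ℕ) : ∃ ℓ : ℕ, ℓ.Prime ∧ ℓ ∉ S ∧ ¬ IsSquare (b : ZMod ℓ) := by
  obtain ⟨n, hn, hJ⟩ := jacobiSym.exists_odd_eq_neg_one hb hb1
  obtain ⟨ℓ, hℓS, hp, hJℓ⟩ := jacobiSym.exists_prime_gt_eq_neg_one hn hJ (S.sup id)
  have : Fact ℓ.Prime := ⟨hp⟩
  exact ⟨ℓ, hp, fun h => (Finset.le_sup (f := id) h).not_gt hℓS,
    ZMod.nonsquare_iff_jacobiSym_eq_neg_one.mp hJℓ⟩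

lemma PadicInt.isSquare_of_isSquare_coe {p : ℕ} [Fact p.Prime] {x : ℤ_[p]}
    (hx : IsSquare (x : ℚ_[p])) : IsSquare x := by
  obtain ⟨t, ht⟩ := hx
  have hnorm : ‖t‖ ≤ 1 := by
    have : ‖t‖ * ‖t‖ ≤ 1 := by rw [← norm_mul, ← ht]; exact x.norm_le_one
    nlinarith [norm_nonneg t]
  exact ⟨⟨t, hnorm⟩, Subtype.ext ht⟩

lemma Int.isSquare_zmod_of_isSquare_padic {p : ℕ} [Fact p.Prime] {b : ℤ}
    (hb : IsSquare (b : ℚ_[p])) : IsSquare (b : ZMod p) := by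
  have : IsSquare (b : ℤ_[p]) := PadicInt.isSquare_of_isSquare_coe (by simpa using hb)
  simpa using this.map PadicInt.toZMod

lemma Int.exists_squarefree_mul_sq (N : ℤ) : ∃ b a : ℤ, Squarefree b ∧ N = b * a ^ 2 := by
  rcases eq_or_ne N 0 with rfl | hN
  · exact ⟨1, 0, squarefree_one, by simp⟩
  obtain ⟨m, a, hma, hm⟩ := Nat.sq_mul_squarefree N.natAbs
  refine ⟨N.sign * m, a, Int.squarefree_natAbs.mp ?_, ?_⟩
  · rwa [Int.natAbs_mul, Int.natAbs_sign_of_ne_zero hN, one_mul, Int.natAbs_natCast]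
  · calc N = N.sign * N.natAbs := (Int.sign_mul_natAbs N).symm
      _ = N.sign * m * a ^ 2 := by rw [← hma]; push_cast; ring

lemma Int.isSquare_of_forall_isSquare_padic {N : ℤ} {S : Finset ℕ}
    (h : ∀ ℓ : ℕ, ∀ [Fact ℓ.Prime], ℓ ∉ S → IsSquare (N : ℚ_[ℓ])) : IsSquare N := by
  obtain ⟨b, a, hb, rfl⟩ := Int.exists_squarefree_mul_sq N
  rcases eq_or_ne a 0 with rfl | ha
  · simp
  by_cases hb1 : b = 1
  · exact ⟨a, by rw [hb1]; ring⟩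
  obtain ⟨ℓ, hp, hℓS, hns⟩ := Int.exists_prime_notMem_not_isSquare_zmod hb hb1 S
  have : Fact ℓ.Prime := ⟨hp⟩
  refine absurd (Int.isSquare_zmod_of_isSquare_padic ?_) hns
  have hdiv := (h ℓ hℓS).div (IsSquare.sq (a : ℚ_[ℓ]))
  have ha' : (a : ℚ_[ℓ]) ≠ 0 := by exact_mod_cast ha
  rwa [Int.cast_mul, Int.cast_pow, mul_div_cancel_right₀ _ (pow_ne_zero 2 ha')] at hdiv

lemma Rat.isSquare_of_forall_isSquare_padic {r : ℚ} {S : Finset ℕ}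
    (h : ∀ ℓ : ℕ, ∀ [Fact ℓ.Prime], ℓ ∉ S → IsSquare (r : ℚ_[ℓ])) : IsSquare r := by
  have hden : (r.den : ℚ) ≠ 0 := by exact_mod_cast r.den_nz
  have hN : ((r.num * r.den : ℤ) : ℚ) = r * (r.den : ℚ) ^ 2 := by
    rw [sq, ← mul_assoc, Rat.mul_den_eq_num]
    push_cast
    rfl
  have hsq : IsSquare (r.num * r.den) := Int.isSquare_of_forall_isSquare_padic fun ℓ _ hℓ => by
    rw [← Rat.cast_intCast, hN, Rat.cast_mul, Rat.cast_pow, Rat.cast_natCast]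
    exact (h ℓ hℓ).mul (IsSquare.sq _)
  rw [eq_div_of_mul_eq (pow_ne_zero 2 hden) hN.symm]
  exact (hsq.map (Int.castRingHom ℚ)).div (IsSquare.sq _)

/-- a nondegenerate rank-one quadratic form over `ℚ` is determined by its
discriminant `α ∈ ℚ^×/(ℚ^×)²`.  If for almost all primes `ℓ` the image of `α` in
`ℚ_ℓ^×/(ℚ_ℓ^×)²` equals the class of a fixed nonzero rational number `c`, then `α = c`
in `ℚ^×/(ℚ^×)²`, i.e. `α/c` is a nonzero rational square. -/
theorem rank_one_form_grunwald_wang (α c : ℚ) (hα : α ≠ 0) (hc : c ≠ 0)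
    (S : Finset ℕ)
    (hloc : ∀ (ℓ : ℕ) (_ : Fact ℓ.Prime), ℓ ∉ S →
      ∃ t : ℚ_[ℓ], t ≠ 0 ∧ (α : ℚ_[ℓ]) = (c : ℚ_[ℓ]) * t ^ 2) :
    ∃ t : ℚ, t ≠ 0 ∧ α = c * t ^ 2 := by
  have hlocal : ∀ ℓ : ℕ, ∀ [Fact ℓ.Prime], ℓ ∉ S → IsSquare ((α / c : ℚ) : ℚ_[ℓ]) := by
    intro ℓ _ hℓ
    obtain ⟨t, -, ht⟩ := hloc ℓ inferInstance hℓ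
    have hc' : (c : ℚ_[ℓ]) ≠ 0 := by exact_mod_cast hc
    exact ⟨t, by rw [Rat.cast_div, ht, mul_div_cancel_left₀ _ hc', sq]⟩
  obtain ⟨t, ht⟩ := Rat.isSquare_of_forall_isSquare_padic hlocal
  refine ⟨t, ?_, ?_⟩
  · rintro rfl
    simp [hα, hc] at ht
  · rw [sq, ← ht, mul_div_cancel₀ _ hc]
end

section
/- Let E ⊇ E₀ and F ⊇ F₀ be finite extensions inside a field L, with E₀, F₀ linearly disjoint over K, E linearly disjoint from F₀ over K, and E₀ linearly disjoint from F over K. For α ∈ E ∩ F, one has [EF:E₀F]·Tr_{E₀F/E₀F₀}(α) = [EF:EF₀]·Tr_{EF₀/E₀F₀}(α), and Tr_{EF₀/E₀F₀}(α) = Tr_{E/E₀}(α). -/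
/-!
Both sides of the first identity equal `Tr_{EF/E₀F₀}(α)`, by transitivity of the trace in the
towers `E₀F₀ ⊆ E₀F ⊆ EF` and `E₀F₀ ⊆ EF₀ ⊆ EF`.

For the second, linear disjointness of `E` and `F₀` over `K` makes `E` and the ring `E₀[F₀]`
linearly disjoint over `E₀` (a `K`-basis of `F₀` is an `E₀`-basis of `E₀[F₀]` that stays
independent over `E`). Hence an `E₀`-basis of `E` stays independent over `E₀[F₀]`, and so over
its fraction field `E₀F₀`; it spans `EF₀` over `E₀F₀` because `E` is algebraic over `E₀`. In this
common basis, multiplication by `α` has the same matrix, with entries in `E₀`, for `EF₀/E₀F₀`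
and for `E/E₀`.
-/

open IntermediateField

/-- The trace, `Tr_{E/F} : E → F ⊆ L`, of a pair of nested intermediate fields
`F ≤ E` of `L/K`, applied to an element `x ∈ E` and viewed inside `L`. -/
noncomputable def relTrace {K L : Type*} [Field K] [Field L] [Algebra K L]
    {F E : IntermediateField K L} (h : F ≤ E) (x : L) (hx : x ∈ E) : L :=
  algebraMap F L (Algebra.trace F (extendScalars h) (⟨x, hx⟩ : extendScalars h))

/-- The degree `[E : F]` of a pair of nested intermediate fields `F ≤ E` of `L/K`. -/
noncomputable def relDegree {K L : Type*} [Field K] [Field L] [Algebra K L]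
    {F E : IntermediateField K L} (h : F ≤ E) : ℕ :=
  Module.finrank F (extendScalars h)

section

variable {K L : Type*} [Field K] [Field L] [Algebra K L]

theorem relTrace_trans {A B D : IntermediateField K L} (hAB : A ≤ B) (hBD : B ≤ D)
    [FiniteDimensional A (extendScalars hAB)] [FiniteDimensional B (extendScalars hBD)]
    {x : L} (hx : x ∈ B) :
    relTrace (hAB.trans hBD) x (hBD hx) = relDegree hBD * relTrace hAB x hx := by
  have hle : extendScalars hAB ≤ extendScalars (hAB.trans hBD) := hBD
  have : FiniteDimensional (extendScalars hAB) (extendScalars hle) :=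
    inferInstanceAs (FiniteDimensional B (extendScalars hBD))
  have : Module.Free A (extendScalars hAB) := .of_divisionRing _ _
  have : Module.Free (extendScalars hAB) (extendScalars hle) := .of_divisionRing _ _
  have htower := Algebra.trace_trace (R := A) (S := extendScalars hAB) (T := extendScalars hle)
    (algebraMap _ _ (⟨x, hx⟩ : extendScalars hAB))
  rw [Algebra.trace_algebraMap, map_nsmul] at htower
  rw [relTrace, relTrace, relDegree, ← nsmul_eq_mul, ← map_nsmul]
  exact congrArg _ htower.symm

section

variable {A B A' B' : IntermediateField K L} {hAB : A ≤ B} {hAB' : A' ≤ B'} {ι : Type*}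
  [Fintype ι] {b : Module.Basis ι A (extendScalars hAB)}
  {b' : Module.Basis ι A' (extendScalars hAB')}

theorem coe_repr_eq_of_coe_basis_eq (hA : A ≤ A') (hb : ∀ i, (b i : L) = b' i)
    {y : extendScalars hAB} {y' : extendScalars hAB'} (hy : (y : L) = y') (i : ι) :
    (b'.repr y' i : L) = b.repr y i := by
  have hy' : y' = ∑ j, (⟨b.repr y j, hA (b.repr y j).2⟩ : A') • b' j := by
    apply Subtype.ext
    have hsum := congrArg Subtype.val (b.sum_repr y)
    rw [← hy, ← hsum]
    simp [Algebra.smul_def, hb]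
  rw [hy', b'.repr_sum_self]

theorem relTrace_eq_of_coe_basis_eq (hA : A ≤ A') (hb : ∀ i, (b i : L) = b' i)
    {x : L} (hx : x ∈ B) (hx' : x ∈ B') : relTrace hAB' x hx' = relTrace hAB x hx := by
  classical
  simp only [relTrace, Algebra.trace_eq_matrix_trace b, Algebra.trace_eq_matrix_trace b',
    Matrix.trace, Matrix.diag, Algebra.leftMulMatrix_eq_repr_mul, map_sum]
  refine Finset.sum_congr rfl fun i _ ↦ coe_repr_eq_of_coe_basis_eq hA hb ?_ i
  simp [hb]

end

namespace IntermediateField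

variable {E₀ E F₀ : IntermediateField K L}

theorem coe_span_range_basis {K' : Type*} [Field K'] [Algebra K' L] {F : IntermediateField K' L}
    {J : Type*} (u : Module.Basis J K' F) :
    (Submodule.span K' (Set.range (F.val ∘ u)) : Set L) = F := by
  have := Submodule.map_span F.val.toLinearMap (Set.range u)
  rw [u.span_eq, Submodule.map_top, ← Set.range_comp] at this
  exact (congrArg SetLike.coe this.symm).trans (by ext; simp)

theorem toSubmodule_algebraAdjoin_eq_span (R : Type*) [CommSemiring R] [Algebra R L]
    (F : IntermediateField K L) :
    Subalgebra.toSubmodule (Algebra.adjoin R (F : Set L)) = Submodule.span R F := by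
  rw [Algebra.adjoin_eq_span]
  congr
  exact Submonoid.closure_eq F.toSubalgebra.toSubmonoid

theorem LinearDisjoint.extendScalars_linearDisjoint_algebraAdjoin (hE : E₀ ≤ E)
    (H : E.LinearDisjoint F₀) :
    (extendScalars hE).toSubalgebra.LinearDisjoint (Algebra.adjoin E₀ (F₀ : Set L)) := by
  let u := Module.Free.chooseBasis K F₀
  have hu : LinearIndependent E₀ (F₀.val ∘ u) :=
    (H.of_le_left hE).linearIndependent_right u.linearIndependent
  have hspan : Subalgebra.toSubmodule (Algebra.adjoin E₀ (F₀ : Set L)) =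
      Submodule.span E₀ (Set.range (F₀.val ∘ u)) := by
    rw [toSubmodule_algebraAdjoin_eq_span, ← coe_span_range_basis u, Submodule.span_span_of_tower]
  let c := (Module.Basis.span hu).map (LinearEquiv.ofEq _ _ hspan.symm)
  have hc : (Algebra.adjoin E₀ (F₀ : Set L)).val ∘ c = F₀.val ∘ u := by
    ext j; exact congrArg Subtype.val (Module.Basis.span_apply hu j)
  refine Subalgebra.LinearDisjoint.of_basis_right _ _ c ?_
  rw [hc]
  exact H.linearIndependent_right u.linearIndependent

theorem restrictScalars_adjoin_coe_eq_sup (E₀ F₀ : IntermediateField K L) :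
    restrictScalars K (adjoin E₀ (F₀ : Set L)) = E₀ ⊔ F₀ := by
  rw [restrictScalars_adjoin_eq_sup, adjoin_self]

open algebraAdjoinAdjoin in
theorem LinearDisjoint.linearIndependent_sup (hE : E₀ ≤ E) (H : E.LinearDisjoint F₀)
    {ι : Type*} {b : ι → extendScalars hE} (hb : LinearIndependent E₀ b) :
    LinearIndependent (E₀ ⊔ F₀ : IntermediateField K L) (fun i ↦ (b i : L)) := by
  have : Module.Flat E₀ (Algebra.adjoin E₀ (F₀ : Set L)) :=
    have := Module.Free.of_divisionRing E₀ (Algebra.adjoin E₀ (F₀ : Set L)); .of_free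
  have hpoly : LinearIndependent (Algebra.adjoin E₀ (F₀ : Set L)) (fun i ↦ (b i : L)) :=
    (H.extendScalars_linearDisjoint_algebraAdjoin hE).linearIndependent_left_of_flat hb
  have hfrac : LinearIndependent (adjoin E₀ (F₀ : Set L)) (fun i ↦ (b i : L)) :=
    (LinearIndependent.iff_fractionRing _ _).mp hpoly
  rw [← restrictScalars_adjoin_coe_eq_sup]
  exact hfrac

theorem mem_span_basis_of_mem_sup (hE : E₀ ≤ E) [FiniteDimensional E₀ (extendScalars hE)]
    {ι : Type*} (b : Module.Basis ι E₀ (extendScalars hE)) {y : L} (hy : y ∈ E ⊔ F₀) :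
    y ∈ Submodule.span (E₀ ⊔ F₀ : IntermediateField K L)
      (Set.range ((extendScalars hE).val ∘ b)) := by
  set F' := adjoin E₀ (F₀ : Set L)
  have hsup : E ⊔ F₀ ≤ restrictScalars K (restrictScalars E₀ (adjoin F' (E : Set L))) :=
    sup_le (fun x hx ↦ subset_adjoin F' _ hx)
      (fun x hx ↦ (adjoin F' _).algebraMap_mem ⟨x, subset_adjoin E₀ _ hx⟩)
  have halg : ∀ x ∈ (E : Set L), IsAlgebraic F' x := fun x hx ↦
    (Algebra.IsAlgebraic.isAlgebraic (R := E₀) (⟨x, hx⟩ : extendScalars hE)).algebraMap.tower_top F'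
  have hle : Subalgebra.toSubmodule (Algebra.adjoin F' (E : Set L)) ≤
      Submodule.span F' (Set.range ((extendScalars hE).val ∘ b)) := by
    rw [toSubmodule_algebraAdjoin_eq_span]
    exact Submodule.span_le.mpr <| (coe_span_range_basis b).superset.trans <|
      SetLike.coe_subset_coe.mpr (Submodule.span_le_restrictScalars E₀ F' _)
  have hy' : y ∈ (adjoin F' (E : Set L)).toSubalgebra := hsup hy
  rw [adjoin_toSubalgebra_of_isAlgebraic halg] at hy'
  rw [← restrictScalars_adjoin_coe_eq_sup]
  exact hle hy'

end IntermediateField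

theorem relTrace_sup_eq_of_linearDisjoint {E₀ E F₀ : IntermediateField K L} (hE : E₀ ≤ E)
    [FiniteDimensional E₀ (extendScalars hE)] (h : E₀ ⊔ F₀ ≤ E ⊔ F₀)
    (H : E.LinearDisjoint F₀) {x : L} (hx : x ∈ E) :
    relTrace h x (le_sup_left (a := E) hx) = relTrace hE x hx := by
  have := Module.Free.of_divisionRing E₀ (extendScalars hE)
  let b := Module.finBasis E₀ (extendScalars hE)
  let v : Fin _ → extendScalars h := fun i ↦ ⟨b i, le_sup_left (a := E) (b i).2⟩
  have hv : LinearIndependent (E₀ ⊔ F₀ : IntermediateField K L) v :=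
    .of_comp (extendScalars h).val.toLinearMap (H.linearIndependent_sup hE b.linearIndependent)
  have hspan : ⊤ ≤ Submodule.span (E₀ ⊔ F₀ : IntermediateField K L) (Set.range v) := by
    rintro y -
    obtain ⟨z, hz, hzy⟩ : (y : L) ∈ (Submodule.span _ (Set.range v)).map
        (extendScalars h).val.toLinearMap := by
      rw [Submodule.map_span, ← Set.range_comp]
      exact mem_span_basis_of_mem_sup hE b y.2
    rwa [← Subtype.ext hzy]
  exact relTrace_eq_of_coe_basis_eq le_sup_left (b := b) (b' := .mk hv hspan)
    (fun i ↦ by simp [v]) hx _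

end

theorem trace_identity_of_linearly_disjoint_general {K L : Type*} [Field K] [Field L]
    [Algebra K L]
    (E₀ E F₀ F : IntermediateField K L) (hE : E₀ ≤ E)
    [FiniteDimensional E₀ (extendScalars hE)]
    (h1 : E₀ ⊔ F₀ ≤ E₀ ⊔ F) (h2 : E₀ ⊔ F₀ ≤ E ⊔ F₀)
    (h3 : E₀ ⊔ F ≤ E ⊔ F) (h4 : E ⊔ F₀ ≤ E ⊔ F)
    [FiniteDimensional (E₀ ⊔ F₀ : IntermediateField K L) (extendScalars h1)]
    [FiniteDimensional (E₀ ⊔ F₀ : IntermediateField K L) (extendScalars h2)]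
    [FiniteDimensional (E₀ ⊔ F : IntermediateField K L) (extendScalars h3)]
    [FiniteDimensional (E ⊔ F₀ : IntermediateField K L) (extendScalars h4)]
    (hdisj₁ : E.LinearDisjoint F₀)
    (α : L) (hαE : α ∈ E) (hαF : α ∈ F) :
    ((relDegree h3 : ℕ) : L) *
        relTrace h1 α ((le_sup_right : F ≤ E₀ ⊔ F) hαF) =
      ((relDegree h4 : ℕ) : L) *
        relTrace h2 α ((le_sup_left : E ≤ E ⊔ F₀) hαE) ∧
    relTrace h2 α ((le_sup_left : E ≤ E ⊔ F₀) hαE) = relTrace hE α hαE := by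
  refine ⟨?_, relTrace_sup_eq_of_linearDisjoint hE h2 hdisj₁ hαE⟩
  rw [← relTrace_trans h1 h3, ← relTrace_trans h2 h4]

/-- let `E ⊇ E₀`, `F ⊇ F₀` be finite extensions inside `L` (all of
characteristic zero), with `E₀, F₀` linearly disjoint over `K`, `E` linearly disjoint
from `F₀` over `K`, and `E₀` linearly disjoint from `F` over `K`.  For `α ∈ E ∩ F`,
one has `[EF:E₀F]·Tr_{E₀F/E₀F₀}(α) = [EF:EF₀]·Tr_{EF₀/E₀F₀}(α)` and
`Tr_{EF₀/E₀F₀}(α) = Tr_{E/E₀}(α)`. -/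
theorem trace_identity_of_linearly_disjoint {K L : Type*} [Field K] [Field L]
    [Algebra K L] [CharZero K]
    (E₀ E F₀ F : IntermediateField K L) (hE : E₀ ≤ E) (hF : F₀ ≤ F)
    [FiniteDimensional E₀ (extendScalars hE)]
    [FiniteDimensional F₀ (extendScalars hF)]
    (h1 : E₀ ⊔ F₀ ≤ E₀ ⊔ F) (h2 : E₀ ⊔ F₀ ≤ E ⊔ F₀)
    (h3 : E₀ ⊔ F ≤ E ⊔ F) (h4 : E ⊔ F₀ ≤ E ⊔ F)
    [FiniteDimensional (E₀ ⊔ F₀ : IntermediateField K L) (extendScalars h1)]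
    [FiniteDimensional (E₀ ⊔ F₀ : IntermediateField K L) (extendScalars h2)]
    [FiniteDimensional (E₀ ⊔ F : IntermediateField K L) (extendScalars h3)]
    [FiniteDimensional (E ⊔ F₀ : IntermediateField K L) (extendScalars h4)]
    (hdisj₀ : E₀.LinearDisjoint F₀)
    (hdisj₁ : E.LinearDisjoint F₀)
    (hdisj₂ : E₀.LinearDisjoint F)
    (α : L) (hαE : α ∈ E) (hαF : α ∈ F) :
    ((relDegree h3 : ℕ) : L) *
        relTrace h1 α ((le_sup_right : F ≤ E₀ ⊔ F) hαF) =
      ((relDegree h4 : ℕ) : L) *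
        relTrace h2 α ((le_sup_left : E ≤ E ⊔ F₀) hαE) ∧
    relTrace h2 α ((le_sup_left : E ≤ E ⊔ F₀) hαE) = relTrace hE α hαE :=
  trace_identity_of_linearly_disjoint_general E₀ E F₀ F hE h1 h2 h3 h4 hdisj₁ α hαE hαF
end
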